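/- Let X be a strong Santha-Vazirani source with bias δ on {0,1}^{2^d−1} and let g_d : {0,1}^{2^d−1} → {0,1}^d map each string to the index of the Hamming-code coset containing it. Then the distribution of g_d(X) is δ-imbalanced: for any two outcomes u₁, u₂ ∈ {0,1}^d, P[g_d(X)=u₁] ≤ ((1+δ)/(1−δ)) · P[g_d(X)=u₂]. -/

import Mathlib

open Finset

/-- `μ` is a probability distribution on the finite type `A`. -/
def IsDist {A : Type*} [Fintype A] (μ : A → ℝ) : Prop :=
  (∀ a, 0 ≤ μ a) ∧ ∑ a, μ a = 1

open Classical in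
/-- Probability of an event under a distribution on a finite type. -/
noncomputable def Pr {A : Type*} [Fintype A] (μ : A → ℝ) (p : A → Prop) : ℝ :=
  ∑ a, if p a then μ a else 0

/-- `μ` is a strong Santha-Vazirani distribution with bias `δ`: for every bit `i` and
every positive-probability assignment `z` of the other bits,
`P[Xᵢ = 1 | all other bits] ∈ [(1−δ)/2, (1+δ)/2]`. -/
def IsStrongSV {n : ℕ} (δ : ℝ) (μ : (Fin n → ZMod 2) → ℝ) : Prop :=
  ∀ (i : Fin n) (z : Fin n → ZMod 2),
    0 < Pr μ (fun x => ∀ j, j ≠ i → x j = z j) →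
      (1 - δ) / 2 * Pr μ (fun x => ∀ j, j ≠ i → x j = z j)
          ≤ Pr μ (fun x => x i = 1 ∧ ∀ j, j ≠ i → x j = z j) ∧
        Pr μ (fun x => x i = 1 ∧ ∀ j, j ≠ i → x j = z j)
          ≤ (1 + δ) / 2 * Pr μ (fun x => ∀ j, j ≠ i → x j = z j)

/-- The parity-check matrix of the Hamming code. -/
def hammingMatrix (d : ℕ) (i : Fin d) (j : Fin (2 ^ d - 1)) : ZMod 2 :=
  if Nat.testBit ((j : ℕ) + 1) (i : ℕ) then 1 else 0

/-- Membership in the Hamming code of length `2^d − 1`. -/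
def inHam (d : ℕ) (x : Fin (2 ^ d - 1) → ZMod 2) : Prop :=
  ∀ i : Fin d, ∑ j, hammingMatrix d i j * x j = 0

/-- `e_i` with `e_0 = 0`. -/
def unitVec (d : ℕ) (i : Fin (2 ^ d)) (j : Fin (2 ^ d - 1)) : ZMod 2 :=
  if (j : ℕ) + 1 = (i : ℕ) then 1 else 0

/-!
The coset index of `x` is read off from its syndrome `Hx`, and the syndrome of `e_u` is the
binary expansion of `u`. Hence translation by `e_w` with `w = u₁ xor u₂` maps the coset of
`u₁` bijectively onto the coset of `u₂`. Since `e_w` is zero or a single basis vector, the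
strong SV property gives `μ x ≤ (1+δ)/(1−δ) · μ (x + e_w)` pointwise, and summing over the
coset of `u₁` gives the claim.
-/

section Pr

variable {A : Type*} [Fintype A] (μ : A → ℝ)

theorem Pr_nonneg (hμ : ∀ a, 0 ≤ μ a) (p : A → Prop) : 0 ≤ Pr μ p :=
  sum_nonneg fun a _ => by split_ifs <;> simp [hμ a]

theorem Pr_eq_apply {p : A → Prop} {a : A} (h : ∀ x, p x ↔ x = a) : Pr μ p = μ a := by
  obtain rfl : p = (· = a) := funext fun x => propext (h x)
  rw [Pr, Fintype.sum_eq_single a fun x hx => if_neg hx, if_pos rfl]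

theorem Pr_eq_apply_add_apply {p : A → Prop} {a b : A} (hab : a ≠ b)
    (h : ∀ x, p x ↔ x = a ∨ x = b) : Pr μ p = μ a + μ b := by
  obtain rfl : p = (fun x => x = a ∨ x = b) := funext fun x => propext (h x)
  rw [Pr, Fintype.sum_eq_add a b hab fun x hx => by simp [hx.1, hx.2]]
  simp [hab.symm]

/-- Translation by `t` is a bijection from the event `f x = a` onto the event `f x = b`. -/
theorem Pr_map_eq_le_mul {G K : Type*} [AddGroup G] [Fintype G] [AddGroup K] {μ : G → ℝ}
    (f : G →+ K) {r : ℝ} {a b : K} {t : G} (ht : a + f t = b)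
    (h : ∀ x, μ x ≤ r * μ (x + t)) :
    Pr μ (fun x => f x = a) ≤ r * Pr μ (fun x => f x = b) := by
  classical
  have hshift : ∀ x, f (x + t) = b ↔ f x = a := fun x => by
    rw [map_add, ← ht, add_left_inj]
  calc Pr μ (fun x => f x = a)
      ≤ ∑ x, if f x = a then r * μ (x + t) else 0 := by
        unfold Pr
        gcongr with x
        split_ifs
        exacts [h x, le_rfl]
    _ = r * ∑ x, if f (x + t) = b then μ (x + t) else 0 := by
        simp only [mul_sum, mul_ite, mul_zero, hshift]
    _ = r * Pr μ (fun x => f x = b) := by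
        rw [Pr]
        congr 1
        exact Equiv.sum_comp (Equiv.addRight t) fun y => if f y = b then μ y else 0

end Pr

theorem AddMonoidHom.exists_map_eq_zero_and_eq_add_iff {G K : Type*} [AddGroup G] [AddGroup K]
    (f : G →+ K) (x e : G) : (∃ c, f c = 0 ∧ x = c + e) ↔ f x = f e := by
  constructor
  · rintro ⟨c, hc, rfl⟩
    simp [hc]
  · intro h
    exact ⟨x - e, by simp [h], by simp⟩

theorem ZMod.two_eq_zero_or_one : ∀ v : ZMod 2, v = 0 ∨ v = 1 := by
  decide

section StrongSV

variable {n : ℕ} {δ : ℝ} {μ : (Fin n → ZMod 2) → ℝ}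

theorem forall_ne_eq_iff_eq_update (x a : Fin n → ZMod 2) (i : Fin n) :
    (∀ j, j ≠ i → a j = x j) ↔ a = Function.update x i 0 ∨ a = Function.update x i 1 := by
  simp only [Function.eq_update_iff]
  rcases ZMod.two_eq_zero_or_one (a i) with h | h <;> simp [h]

theorem Pr_fiber (x : Fin n → ZMod 2) (i : Fin n) :
    Pr μ (fun a => ∀ j, j ≠ i → a j = x j)
      = μ (Function.update x i 0) + μ (Function.update x i 1) :=
  Pr_eq_apply_add_apply μ (fun h => by simpa using congrFun h i)
    fun a => forall_ne_eq_iff_eq_update x a i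

theorem Pr_fiber_one (x : Fin n → ZMod 2) (i : Fin n) :
    Pr μ (fun a => a i = 1 ∧ ∀ j, j ≠ i → a j = x j) = μ (Function.update x i 1) :=
  Pr_eq_apply μ fun _ => Function.eq_update_iff.symm

theorem le_div_mul_of_sv_bounds {a b : ℝ} (hδ1 : δ < 1)
    (hlo : (1 - δ) / 2 * (a + b) ≤ b) (hhi : b ≤ (1 + δ) / 2 * (a + b)) :
    a ≤ (1 + δ) / (1 - δ) * b ∧ b ≤ (1 + δ) / (1 - δ) * a := by
  have h1δ : 0 < 1 - δ := by linarith
  constructor <;> rw [div_mul_eq_mul_div, le_div_iff₀ h1δ] <;> linarith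

theorem IsStrongSV.update_le (hsv : IsStrongSV δ μ) (hδ1 : δ < 1) (hμ : ∀ a, 0 ≤ μ a)
    (x : Fin n → ZMod 2) (i : Fin n) :
    μ (Function.update x i 0) ≤ (1 + δ) / (1 - δ) * μ (Function.update x i 1) ∧
      μ (Function.update x i 1) ≤ (1 + δ) / (1 - δ) * μ (Function.update x i 0) := by
  rcases (Pr_nonneg μ hμ (fun a => ∀ j, j ≠ i → a j = x j)).lt_or_eq with hpos | hzero
  · obtain ⟨hlo, hhi⟩ := hsv i x hpos
    rw [Pr_fiber, Pr_fiber_one] at hlo hhi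
    exact le_div_mul_of_sv_bounds hδ1 hlo hhi
  · rw [Pr_fiber] at hzero
    have h0 := hμ (Function.update x i 0)
    have h1 := hμ (Function.update x i 1)
    rw [show μ (Function.update x i 0) = 0 by linarith,
      show μ (Function.update x i 1) = 0 by linarith]
    simp

theorem IsStrongSV.le_mul_add_single (hsv : IsStrongSV δ μ) (hδ1 : δ < 1)
    (hμ : ∀ a, 0 ≤ μ a) (x : Fin n → ZMod 2) (i : Fin n) :
    μ x ≤ (1 + δ) / (1 - δ) * μ (x + Pi.single i 1) := by
  have hadd : x + Pi.single i 1 = Function.update x i (x i + 1) := by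
    ext j
    by_cases hj : j = i
    · subst hj; simp
    · simp [hj]
  have hbounds := hsv.update_le hδ1 hμ x i
  rw [hadd]
  rcases ZMod.two_eq_zero_or_one (x i) with h | h
  · rw [h, zero_add]
    simpa [← h] using hbounds.1
  · rw [h, show (1 + 1 : ZMod 2) = 0 from rfl]
    simpa [← h] using hbounds.2

end StrongSV

section Hamming

variable {d : ℕ}

def binaryVec (d u : ℕ) (i : Fin d) : ZMod 2 :=
  if u.testBit i then 1 else 0

theorem binaryVec_add_binaryVec_xor (u v : ℕ) :
    binaryVec d u + binaryVec d (u ^^^ v) = binaryVec d v := by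
  ext i
  simp only [binaryVec, Pi.add_apply, Nat.testBit_xor]
  cases u.testBit i <;> cases v.testBit i <;> decide

def syndrome (d : ℕ) : (Fin (2 ^ d - 1) → ZMod 2) →+ (Fin d → ZMod 2) :=
  (Matrix.of (hammingMatrix d)).mulVecLin.toAddMonoidHom

theorem inHam_iff_syndrome_eq_zero (c : Fin (2 ^ d - 1) → ZMod 2) :
    inHam d c ↔ syndrome d c = 0 :=
  funext_iff.symm

theorem mem_coset_iff_syndrome_eq (u : Fin (2 ^ d)) (x : Fin (2 ^ d - 1) → ZMod 2) :
    (∃ c, inHam d c ∧ x = c + unitVec d u) ↔ syndrome d x = syndrome d (unitVec d u) := by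
  simp only [inHam_iff_syndrome_eq_zero]
  exact (syndrome d).exists_map_eq_zero_and_eq_add_iff x _

theorem unitVec_eq_zero {u : Fin (2 ^ d)} (hu : (u : ℕ) = 0) : unitVec d u = 0 := by
  ext j
  simp [unitVec, hu]

theorem unitVec_eq_single {u : Fin (2 ^ d)} {j : Fin (2 ^ d - 1)} (hj : (j : ℕ) + 1 = u) :
    unitVec d u = Pi.single j 1 := by
  ext k
  simp only [unitVec, Pi.single_apply, ← hj, Fin.ext_iff, add_left_inj]

/-- Column `j` of the parity-check matrix is the binary expansion of `j + 1`. -/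
theorem syndrome_unitVec (u : Fin (2 ^ d)) : syndrome d (unitVec d u) = binaryVec d u := by
  by_cases hu : (u : ℕ) = 0
  · ext i
    simp [unitVec_eq_zero hu, hu, binaryVec]
  · have hj : (u : ℕ) - 1 < 2 ^ d - 1 := by omega
    rw [unitVec_eq_single (j := ⟨(u : ℕ) - 1, hj⟩) (by simp; omega)]
    ext i
    simp [syndrome, hammingMatrix, binaryVec, Nat.sub_add_cancel
      (Nat.one_le_iff_ne_zero.mpr hu)]

end Hamming

theorem IsStrongSV.le_mul_add_unitVec {d : ℕ} {δ : ℝ}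
    {μ : (Fin (2 ^ d - 1) → ZMod 2) → ℝ} (hsv : IsStrongSV δ μ) (hδ0 : 0 ≤ δ) (hδ1 : δ < 1) (hμ : ∀ a, 0 ≤ μ a)
    (x : Fin (2 ^ d - 1) → ZMod 2) (u : Fin (2 ^ d)) :
    μ x ≤ (1 + δ) / (1 - δ) * μ (x + unitVec d u) := by
  by_cases hu : (u : ℕ) = 0
  · have hr : 1 ≤ (1 + δ) / (1 - δ) := by rw [le_div_iff₀ (by linarith)]; linarith
    rw [unitVec_eq_zero hu, add_zero]
    exact le_mul_of_one_le_left (hμ x) hr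
  · have hj : (u : ℕ) - 1 < 2 ^ d - 1 := by omega
    rw [unitVec_eq_single (j := ⟨(u : ℕ) - 1, hj⟩) (by simp; omega)]
    exact hsv.le_mul_add_single hδ1 hμ x _

theorem coset_distribution_imbalanced_general (d : ℕ)
    (δ : ℝ) (hδ0 : 0 ≤ δ) (hδ1 : δ < 1)
    (μ : (Fin (2 ^ d - 1) → ZMod 2) → ℝ) (hμ : IsDist μ) (hsv : IsStrongSV δ μ) :
    ∀ u₁ u₂ : Fin (2 ^ d),
      Pr μ (fun x => ∃ c, inHam d c ∧ x = c + unitVec d u₁)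
        ≤ (1 + δ) / (1 - δ) * Pr μ (fun x => ∃ c, inHam d c ∧ x = c + unitVec d u₂) := by
  intro u₁ u₂
  let w : Fin (2 ^ d) := ⟨u₁ ^^^ u₂, Nat.xor_lt_two_pow u₁.isLt u₂.isLt⟩
  have hshift : syndrome d (unitVec d u₁) + syndrome d (unitVec d w)
      = syndrome d (unitVec d u₂) := by
    simp only [syndrome_unitVec]
    exact binaryVec_add_binaryVec_xor _ _
  simp only [mem_coset_iff_syndrome_eq]
  exact Pr_map_eq_le_mul (syndrome d) hshift fun x => hsv.le_mul_add_unitVec hδ0 hδ1 hμ.1 x w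

/-- If `X` is a strong SV source with bias `δ` on `{0,1}^{2^d−1}` and `g_d` maps each
string to the index of its Hamming-code coset, then `g_d(X)` is `δ`-imbalanced:
`P[g_d(X)=u₁] ≤ ((1+δ)/(1−δ))·P[g_d(X)=u₂]` for all `u₁, u₂`. -/
theorem coset_distribution_imbalanced (d : ℕ) (hd : 1 ≤ d)
    (δ : ℝ) (hδ0 : 0 ≤ δ) (hδ1 : δ < 1)
    (μ : (Fin (2 ^ d - 1) → ZMod 2) → ℝ) (hμ : IsDist μ) (hsv : IsStrongSV δ μ) :
    ∀ u₁ u₂ : Fin (2 ^ d),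
      Pr μ (fun x => ∃ c, inHam d c ∧ x = c + unitVec d u₁)
        ≤ (1 + δ) / (1 - δ) * Pr μ (fun x => ∃ c, inHam d c ∧ x = c + unitVec d u₂) :=
  coset_distribution_imbalanced_general d δ hδ0 hδ1 μ hμ hsv
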